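/- arXiv:2203.09045 — 2 statements merged into one kernel-verified Lean document; each statement's English description precedes it below -/
import Mathlib

section
/- Every real hz-ultrafilter on a Tychonoff space X is fixed. -/
open Set Topology

variable {X : Type*}

def IsZeroSet [TopologicalSpace X] (Z : Set X) : Prop :=
  ∃ f : X → ℝ, Continuous f ∧ Z = {x | f x = 0}

def IsZFilter [TopologicalSpace X] (F : Set (Set X)) : Prop :=
  (∀ Z ∈ F, IsZeroSet Z) ∧ (∅ : Set X) ∉ F ∧ Set.univ ∈ F ∧
  (∀ Z₁ ∈ F, ∀ Z₂ ∈ F, Z₁ ∩ Z₂ ∈ F) ∧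
  (∀ Z₁ ∈ F, ∀ Z₂ : Set X, IsZeroSet Z₂ → Z₁ ⊆ Z₂ → Z₂ ∈ F)

def IsZUltrafilter [TopologicalSpace X] (F : Set (Set X)) : Prop :=
  IsZFilter F ∧ ∀ G : Set (Set X), IsZFilter G → F ⊆ G → G = F

def IsPrimeZFilter [TopologicalSpace X] (F : Set (Set X)) : Prop :=
  IsZFilter F ∧ ∀ Z₁ Z₂ : Set X, IsZeroSet Z₁ → IsZeroSet Z₂ → Z₁ ∪ Z₂ ∈ F →
    Z₁ ∈ F ∨ Z₂ ∈ F

def HasCIP (F : Set (Set X)) : Prop :=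
  ∀ s : ℕ → Set X, (∀ n, s n ∈ F) → (⋂ n, s n).Nonempty

def IsFixedFamily (F : Set (Set X)) : Prop := (⋂₀ F).Nonempty

def IsRealcompact (Y : Type*) [TopologicalSpace Y] : Prop :=
  ∀ F : Set (Set Y), IsZUltrafilter F → HasCIP F → IsFixedFamily F

def CompletelySeparated [TopologicalSpace X] (A B : Set X) : Prop :=
  ∃ f : X → ℝ, Continuous f ∧ (∀ x ∈ A, f x = 0) ∧ (∀ x ∈ B, f x = 1)

def IsHard [TopologicalSpace X] (H : Set X) : Prop :=
  IsClosed H ∧ ∃ K : Set X, IsCompact K ∧ ∀ V : Set X, IsOpen V → K ⊆ V →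
    ∃ P : Set X, IsRealcompact ↥P ∧ CompletelySeparated (H \ V) Pᶜ

def IsPseudocompact (Y : Type*) [TopologicalSpace Y] : Prop :=
  ∀ f : Y → ℝ, Continuous f → ∃ M : ℝ, ∀ y, |f y| ≤ M

def NearlyPseudocompact (Y : Type*) [TopologicalSpace Y] : Prop :=
  ∃ X₁ X₂ : Set Y, X₁ ∪ X₂ = Set.univ ∧
    X₁ = closure (interior X₁) ∧
    X₁ = closure {y : Y | ∃ K : Set Y, IsCompact K ∧ K ∈ nhds y} ∧
    IsPseudocompact ↥X₁ ∧
    X₂ = closure (interior X₂) ∧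
    (∀ y ∈ X₂, ¬ ∃ N ∈ nhds y, IsRealcompact ↥N) ∧
    interior (X₁ ∩ X₂) = (∅ : Set Y)

def IsHZFilter [TopologicalSpace X] (F : Set (Set X)) : Prop :=
  IsZFilter F ∧ ∀ Z ∈ F, ∃ H ∈ F, IsHard H ∧ H ⊆ Z

def IsHZUltrafilter [TopologicalSpace X] (F : Set (Set X)) : Prop :=
  IsZUltrafilter F ∧ ∃ H ∈ F, IsHard H

def deltaX (X : Type*) [TopologicalSpace X] : Type _ :=
  {F : Set (Set X) // IsZUltrafilter F ∧ (IsFixedFamily F ∨ ∃ H ∈ F, IsHard H)}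

def deltaCl [TopologicalSpace X] (Z : Set X) : Set (deltaX X) :=
  {p | Z ∈ p.1}

instance [TopologicalSpace X] : TopologicalSpace (deltaX X) :=
  TopologicalSpace.generateFrom {U | ∃ Z : Set X, IsZeroSet Z ∧ U = (deltaCl Z)ᶜ}

def pointUltra [TopologicalSpace X] (x : X) : Set (Set X) :=
  {Z | IsZeroSet Z ∧ x ∈ Z}
section ZS
variable {Y : Type*} [TopologicalSpace Y]

lemma zs_univ : IsZeroSet (univ : Set Y) :=
  ⟨fun _ => 0, continuous_const, by simp⟩

lemma zs_inter {A B : Set Y} (hA : IsZeroSet A) (hB : IsZeroSet B) : IsZeroSet (A ∩ B) := by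
  obtain ⟨f, hf, rfl⟩ := hA
  obtain ⟨g, hg, rfl⟩ := hB
  refine ⟨fun x => |f x| + |g x|, hf.abs.add hg.abs, ?_⟩
  ext x
  simp only [mem_inter_iff, mem_setOf_eq]
  rw [add_eq_zero_iff_of_nonneg (abs_nonneg _) (abs_nonneg _), abs_eq_zero, abs_eq_zero]

lemma zs_closed {A : Set Y} (hA : IsZeroSet A) : IsClosed A := by
  obtain ⟨f, hf, rfl⟩ := hA
  exact isClosed_eq hf continuous_const

lemma zs_le {φ : Y → ℝ} (hφ : Continuous φ) (r : ℝ) : IsZeroSet {x | φ x ≤ r} := by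
  refine ⟨fun x => max (φ x - r) 0, (hφ.sub continuous_const).max continuous_const, ?_⟩
  ext x
  simp only [mem_setOf_eq, max_eq_right_iff]
  constructor
  · intro h; linarith
  · intro h; linarith

lemma zs_ge {φ : Y → ℝ} (hφ : Continuous φ) (r : ℝ) : IsZeroSet {x | r ≤ φ x} := by
  refine ⟨fun x => max (r - φ x) 0, (continuous_const.sub hφ).max continuous_const, ?_⟩
  ext x
  simp only [mem_setOf_eq, max_eq_right_iff]
  constructor
  · intro h; linarith
  · intro h; linarith

lemma zs_preimage {Z : Type*} [TopologicalSpace Z] {g : Z → Y} (hg : Continuous g)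
    {A : Set Y} (hA : IsZeroSet A) : IsZeroSet (g ⁻¹' A) := by
  obtain ⟨f, hf, rfl⟩ := hA
  exact ⟨f ∘ g, hf.comp hg, rfl⟩

lemma zs_sep {A B : Set Y} (hA : IsZeroSet A) (hB : IsZeroSet B) (hd : A ∩ B = ∅) :
    ∃ h : Y → ℝ, Continuous h ∧ (∀ x ∈ A, h x = 0) ∧ (∀ x ∈ B, h x = 1) := by
  obtain ⟨f, hf, rfl⟩ := hA
  obtain ⟨g, hg, rfl⟩ := hB
  have hden : ∀ x, |f x| + |g x| ≠ 0 := by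
    intro x hx
    rw [add_eq_zero_iff_of_nonneg (abs_nonneg _) (abs_nonneg _), abs_eq_zero, abs_eq_zero] at hx
    have : x ∈ ({x | f x = 0} ∩ {x | g x = 0} : Set Y) := hx
    rw [hd] at this; exact this
  refine ⟨fun x => |f x| / (|f x| + |g x|), hf.abs.div (hf.abs.add hg.abs) hden, ?_, ?_⟩
  · intro x hx
    simp only [mem_setOf_eq] at hx
    simp [hx]
  · intro x hx
    simp only [mem_setOf_eq] at hx
    have hf0 : |f x| ≠ 0 := by
      intro h0
      exact hden x (by rw [h0, hx]; simp)
    simp only []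
    rw [show |g x| = 0 by rw [abs_eq_zero]; exact hx, add_zero, div_self hf0]

lemma zfilter_mem_nonempty {U : Set (Set Y)} (hU : IsZFilter U) {A : Set Y} (hA : A ∈ U) :
    A.Nonempty := by
  rcases eq_empty_or_nonempty A with rfl | h
  · exact absurd hA hU.2.1
  · exact h

lemma ultra_mem_of_forall_meets {U : Set (Set Y)} (hU : IsZUltrafilter U) {Z : Set Y}
    (hZ : IsZeroSet Z) (h : ∀ A ∈ U, (Z ∩ A).Nonempty) : Z ∈ U := by
  obtain ⟨⟨hzero, hne, huniv, hinter, hup⟩, hmax⟩ := hU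
  set G : Set (Set Y) := {W | IsZeroSet W ∧ ∃ A ∈ U, Z ∩ A ⊆ W} with hGdef
  have hG : IsZFilter G := by
    refine ⟨fun W hW => hW.1, ?_, ⟨zs_univ, univ, huniv, subset_univ _⟩, ?_, ?_⟩
    · rintro ⟨-, A, hA, hsub⟩
      exact (h A hA).ne_empty (subset_empty_iff.mp hsub)
    · rintro W₁ ⟨hW₁, A₁, hA₁, hs₁⟩ W₂ ⟨hW₂, A₂, hA₂, hs₂⟩
      exact ⟨zs_inter hW₁ hW₂, A₁ ∩ A₂, hinter A₁ hA₁ A₂ hA₂,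
        fun x hx => ⟨hs₁ ⟨hx.1, hx.2.1⟩, hs₂ ⟨hx.1, hx.2.2⟩⟩⟩
    · rintro W₁ ⟨hW₁, A, hA, hs⟩ W₂ hW₂ hsub
      exact ⟨hW₂, A, hA, hs.trans hsub⟩
  have hsub : U ⊆ G := fun A hA => ⟨hzero A hA, A, hA, inter_subset_right⟩
  have hGU := hmax G hG hsub
  rw [← hGU]
  exact ⟨hZ, univ, huniv, fun x hx => hx.1⟩

lemma ultra_prime {U : Set (Set Y)} (hU : IsZUltrafilter U) {Z₁ Z₂ : Set Y}
    (h₁ : IsZeroSet Z₁) (h₂ : IsZeroSet Z₂) (hmem : Z₁ ∪ Z₂ ∈ U) : Z₁ ∈ U ∨ Z₂ ∈ U := by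
  by_cases hZ₁ : Z₁ ∈ U
  · exact Or.inl hZ₁
  · right
    have hnot : ¬ ∀ A ∈ U, (Z₁ ∩ A).Nonempty := fun hh =>
      hZ₁ (ultra_mem_of_forall_meets hU h₁ hh)
    push_neg at hnot
    obtain ⟨A, hA, hAe⟩ := hnot
    rw [← not_nonempty_iff_eq_empty] at hAe
    rw [not_nonempty_iff_eq_empty] at hAe
    apply ultra_mem_of_forall_meets hU h₂
    intro B hB
    have hABU : (Z₁ ∪ Z₂) ∩ (A ∩ B) ∈ U :=
      hU.1.2.2.2.1 _ hmem _ (hU.1.2.2.2.1 A hA B hB)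
    obtain ⟨x, hx⟩ := zfilter_mem_nonempty hU.1 hABU
    rcases hx.1 with hx1 | hx2
    · exact absurd (show x ∈ Z₁ ∩ A from ⟨hx1, hx.2.1⟩) (by rw [hAe]; exact notMem_empty x)
    · exact ⟨x, hx2, hx.2.2⟩

end ZS

lemma key_split {X : Type*} [TopologicalSpace X] {U : Set (Set X)} (hU : IsZUltrafilter U)
    {P : Set X} {f : X → ℝ} (hf : Continuous f) (hWU : {x | f x = 0} ∈ U)
    (hfP : ∀ x ∉ P, f x = 1)
    {c : ↥P → ℝ} (hc : Continuous c) {a b : ℝ} (hab : a < b) :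
    (∃ Z ∈ U, (Subtype.val ⁻¹' Z : Set ↥P) ⊆ {p | c p ≤ b}) ∨
    (∃ Z ∈ U, (Subtype.val ⁻¹' Z : Set ↥P) ⊆ {p | a ≤ c p}) := by
  classical
  set F₀ : X → ℝ := fun x => min |f x| 1 with hF₀def
  have hF₀ : Continuous F₀ := hf.abs.min continuous_const
  have hF₀le : ∀ x, F₀ x ≤ 1 := fun x => min_le_right _ _
  set u : ↥P → ℝ := fun p => max 0 (min ((c p - a) / (b - a)) 1) with hudef
  have hu : Continuous u :=
    continuous_const.max (((hc.sub continuous_const).div_const _).min continuous_const)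
  have hu0 : ∀ p, 0 ≤ u p := fun p => le_max_left _ _
  have hu1 : ∀ p, u p ≤ 1 := fun p => max_le zero_le_one (min_le_right _ _)
  set φ : X → ℝ := fun x => if h : x ∈ P then (1 - F₀ x) * u ⟨x, h⟩ else 0 with hφdef
  have hφbound : ∀ x, |φ x| ≤ 1 - F₀ x := by
    intro x
    by_cases h : x ∈ P
    · simp only [hφdef, dif_pos h]
      rw [abs_mul, abs_of_nonneg (by linarith [hF₀le x] : (0:ℝ) ≤ 1 - F₀ x),
        abs_of_nonneg (hu0 _)]
      calc (1 - F₀ x) * u ⟨x, h⟩ ≤ (1 - F₀ x) * 1 :=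
            mul_le_mul_of_nonneg_left (hu1 _) (by linarith [hF₀le x])
        _ = 1 - F₀ x := mul_one _
    · simp only [hφdef, dif_neg h, abs_zero]
      linarith [hF₀le x]
  have hOP : {x | F₀ x < 1} ⊆ P := by
    intro x hx
    by_contra hxP
    simp only [mem_setOf_eq, hF₀def, hfP x hxP] at hx
    norm_num at hx
  have hφcont : Continuous φ := by
    rw [continuous_iff_continuousAt]
    intro x₀
    by_cases h0 : F₀ x₀ < 1
    · have hO : IsOpen {x | F₀ x < 1} := isOpen_lt hF₀ continuous_const
      apply ContinuousOn.continuousAt ?_ (hO.mem_nhds h0)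
      rw [continuousOn_iff_continuous_restrict]
      have heq : ({x | F₀ x < 1}).domRestrict φ =
          fun o : {x | F₀ x < 1} => (1 - F₀ ↑o) * u ⟨↑o, hOP o.2⟩ := by
        funext o
        simp only [domRestrict, hφdef, dif_pos (hOP o.2)]
      rw [heq]
      exact (continuous_const.sub (hF₀.comp continuous_subtype_val)).mul
        (hu.comp (continuous_subtype_val.subtype_mk _))
    · have h1 : F₀ x₀ = 1 := le_antisymm (hF₀le x₀) (not_lt.mp h0)
      have hval : φ x₀ = 0 := by
        by_cases h : x₀ ∈ P
        · simp [hφdef, dif_pos h, h1]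
        · simp [hφdef, dif_neg h]
      unfold ContinuousAt
      rw [hval]
      refine squeeze_zero_norm (a := fun x => 1 - F₀ x) (fun x => ?_) ?_
      · rw [Real.norm_eq_abs]; exact hφbound x
      · have htd : Filter.Tendsto (fun x => 1 - F₀ x) (𝓝 x₀) (𝓝 (1 - F₀ x₀)) :=
          (continuous_const.sub hF₀).tendsto x₀
        rwa [h1, sub_self] at htd
  have hW0 : ∀ x : X, f x = 0 → F₀ x = 0 := by
    intro x hx; simp [hF₀def, hx]
  have huu : {x | φ x ≤ 1/2} ∪ {x | 1/2 ≤ φ x} = univ := by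
    ext x
    simp only [mem_union, mem_setOf_eq, mem_univ, iff_true]
    exact le_total _ _
  have hmem : {x | φ x ≤ 1/2} ∪ {x | 1/2 ≤ φ x} ∈ U := by
    rw [huu]; exact hU.1.2.2.1
  have hφval : ∀ (p : ↥P), f ↑p = 0 → φ ↑p = u p := by
    intro p hp
    simp only [hφdef, dif_pos p.2]
    rw [hW0 _ hp]
    simp [Subtype.coe_eta]
  rcases ultra_prime hU (zs_le hφcont (1/2)) (zs_ge hφcont (1/2)) hmem with hT | hT
  · left
    refine ⟨{x | f x = 0} ∩ {x | φ x ≤ 1/2}, hU.1.2.2.2.1 _ hWU _ hT, ?_⟩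
    rintro p ⟨hpW, hpT⟩
    simp only [mem_setOf_eq] at hpW hpT ⊢
    by_contra hcb
    push_neg at hcb
    have hr : (1:ℝ) ≤ (c p - a) / (b - a) := (one_le_div (by linarith)).mpr (by linarith)
    have hup1 : u p = 1 := by
      simp only [hudef, min_eq_right hr]
      exact max_eq_right zero_le_one
    rw [hφval p hpW, hup1] at hpT
    norm_num at hpT
  · right
    refine ⟨{x | f x = 0} ∩ {x | 1/2 ≤ φ x}, hU.1.2.2.2.1 _ hWU _ hT, ?_⟩
    rintro p ⟨hpW, hpT⟩
    simp only [mem_setOf_eq] at hpW hpT ⊢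
    by_contra hcb
    push_neg at hcb
    have hr : (c p - a) / (b - a) < 0 := div_neg_of_neg_of_pos (by linarith) (by linarith)
    have hup0 : u p = 0 := by
      simp only [hudef]
      rw [max_eq_left (le_of_lt (lt_of_le_of_lt (min_le_left _ _) hr))]
    rw [hφval p hpW, hup0] at hpT
    norm_num at hpT

/-- every real hz-ultrafilter is fixed. -/
theorem stmt11 [TopologicalSpace X] [T35Space X] (U : Set (Set X))
    (hU : IsHZUltrafilter U) (hreal : HasCIP U) : IsFixedFamily U := by
  classical
  obtain ⟨hUu, H, hHU, hHcl, K, hKcomp, hKprop⟩ := hU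
  obtain ⟨⟨hzero, hne, huniv, hinter, hup⟩, hmax⟩ := id hUu
  by_cases hK : ∀ Z ∈ U, (Z ∩ K).Nonempty
  · haveI : Nonempty {Z // Z ∈ U} := ⟨⟨univ, huniv⟩⟩
    have hKcl : IsClosed K := hKcomp.isClosed
    have hdir : Directed (fun x1 x2 => x1 ⊇ x2) (fun Z : {Z // Z ∈ U} => (Z : Set X) ∩ K) := by
      rintro ⟨Z₁, hZ₁⟩ ⟨Z₂, hZ₂⟩
      exact ⟨⟨Z₁ ∩ Z₂, hinter _ hZ₁ _ hZ₂⟩,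
        fun x hx => ⟨hx.1.1, hx.2⟩, fun x hx => ⟨hx.1.2, hx.2⟩⟩
    have hne' := IsCompact.nonempty_iInter_of_directed_nonempty_isCompact_isClosed _ hdir
      (fun Z => hK _ Z.2)
      (fun Z => hKcomp.inter_left (zs_closed (hzero _ Z.2)))
      (fun Z => ((zs_closed (hzero _ Z.2)).inter hKcl))
    obtain ⟨x, hx⟩ := hne'
    exact ⟨x, fun Z hZ => (mem_iInter.mp hx ⟨Z, hZ⟩).1⟩
  · push_neg at hK
    obtain ⟨Z₀, hZ₀U, hZ₀K⟩ := hK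
    rw [← not_nonempty_iff_eq_empty] at hZ₀K
    rw [not_nonempty_iff_eq_empty] at hZ₀K
    have hZ₀cl : IsClosed Z₀ := zs_closed (hzero _ hZ₀U)
    obtain ⟨P, hPrc, g, hg, hg0, hg1⟩ := hKprop Z₀ᶜ hZ₀cl.isOpen_compl
      (fun x hx hxZ => (eq_empty_iff_forall_notMem.mp hZ₀K x ⟨hxZ, hx⟩))
    set W : Set X := {x | g x = 0} with hWdef
    have hWU : W ∈ U := by
      apply hup (H ∩ Z₀) (hinter _ hHU _ hZ₀U) W ⟨g, hg, rfl⟩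
      intro x hx
      exact hg0 x ⟨hx.1, fun hc => hc hx.2⟩
    have hWP : W ⊆ P := by
      intro x hx
      by_contra hxP
      have h1 := hg1 x hxP
      rw [hWdef] at hx
      simp only [mem_setOf_eq] at hx
      rw [hx] at h1
      norm_num at h1
    have hgP : ∀ x ∉ P, g x = 1 := fun x hx => hg1 x hx
    set Fc : Set (Set ↥P) :=
      {A | IsZeroSet A ∧ ∃ Z ∈ U, (Subtype.val ⁻¹' Z : Set ↥P) ⊆ A} with hFcdef
    have hFne : ∀ A ∈ Fc, A.Nonempty := by
      rintro A ⟨hAz, Z, hZU, hsub⟩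
      obtain ⟨x, hx⟩ := zfilter_mem_nonempty hUu.1 (hinter _ hZU _ hWU)
      exact ⟨⟨x, hWP hx.2⟩, hsub hx.1⟩
    have hpre : ∀ Z ∈ U, (Subtype.val ⁻¹' Z : Set ↥P) ∈ Fc :=
      fun Z hZ => ⟨zs_preimage continuous_subtype_val (hzero _ hZ), Z, hZ, subset_rfl⟩
    have hFinter : ∀ A ∈ Fc, ∀ B ∈ Fc, A ∩ B ∈ Fc := by
      rintro A ⟨hAz, Z₁, hZ₁, hs₁⟩ B ⟨hBz, Z₂, hZ₂, hs₂⟩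
      exact ⟨zs_inter hAz hBz, Z₁ ∩ Z₂, hinter _ hZ₁ _ hZ₂,
        fun p hp => ⟨hs₁ hp.1, hs₂ hp.2⟩⟩
    have hFuniv : (univ : Set ↥P) ∈ Fc := ⟨zs_univ, univ, huniv, subset_univ _⟩
    have hkey : ∀ (c : ↥P → ℝ), Continuous c → ∀ a b : ℝ, a < b →
        {p | c p ≤ b} ∈ Fc ∨ {p | a ≤ c p} ∈ Fc := by
      intro c hc a b hab
      rcases key_split hUu hg hWU hgP hc hab with ⟨Z, hZ, hs⟩ | ⟨Z, hZ, hs⟩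
      · exact Or.inl ⟨zs_le hc b, Z, hZ, hs⟩
      · exact Or.inr ⟨zs_ge hc a, Z, hZ, hs⟩
    set G : Set (Set ↥P) := {A | IsZeroSet A ∧ ∀ B ∈ Fc, (A ∩ B).Nonempty} with hGdef
    have hFG : Fc ⊆ G := fun A hA => ⟨hA.1, fun B hB => hFne _ (hFinter _ hA _ hB)⟩
    have hGfil : IsZFilter G := by
      refine ⟨fun A hA => hA.1, ?_, ⟨zs_univ, fun B hB => by simpa using hFne B hB⟩, ?_, ?_⟩
      · rintro ⟨-, hmeets⟩
        obtain ⟨p, hp⟩ := hmeets univ hFuniv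
        exact hp.1
      · rintro A₁ ⟨hA₁z, hA₁⟩ A₂ ⟨hA₂z, hA₂⟩
        refine ⟨zs_inter hA₁z hA₂z, ?_⟩
        intro B hB
        by_contra hemp
        rw [not_nonempty_iff_eq_empty] at hemp
        have hd : (A₁ ∩ B) ∩ A₂ = ∅ := by
          rw [← hemp]
          ext p
          constructor
          · rintro ⟨⟨h1, h2⟩, h3⟩; exact ⟨⟨h1, h3⟩, h2⟩
          · rintro ⟨⟨h1, h3⟩, h2⟩; exact ⟨⟨h1, h2⟩, h3⟩
        obtain ⟨h, hhc, hh0, hh1⟩ := zs_sep (zs_inter hA₁z hB.1) hA₂z hd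
        rcases hkey h hhc (1/3) (2/3) (by norm_num) with hC | hD
        · obtain ⟨q, hq⟩ := hA₂ _ hC
          have hval := hh1 q hq.1
          have h23 := hq.2
          simp only [mem_setOf_eq] at h23
          rw [hval] at h23
          norm_num at h23
        · obtain ⟨q, hq⟩ := hA₁ _ (hFinter _ hB _ hD)
          have hval := hh0 q ⟨hq.1, hq.2.1⟩
          have h13 := hq.2.2
          simp only [mem_setOf_eq] at h13
          rw [hval] at h13
          norm_num at h13
      · rintro A ⟨hAz, hA⟩ A' hA'z hsub
        exact ⟨hA'z, fun B hB => ((hA B hB).mono (inter_subset_inter_left _ hsub))⟩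
    have hGmax : ∀ G' : Set (Set ↥P), IsZFilter G' → G ⊆ G' → G' = G := by
      intro G' hG' hsub
      apply Subset.antisymm _ hsub
      intro A hA
      refine ⟨hG'.1 A hA, fun B hB => ?_⟩
      exact zfilter_mem_nonempty hG' (hG'.2.2.2.1 _ hA _ (hsub (hFG hB)))
    have hGCIP : HasCIP G := by
      intro s hs
      have hzs : ∀ n, IsZeroSet (s n) := fun n => (hs n).1
      choose gg hggc hggeq using hzs
      have hT : ∀ n k : ℕ, {p : ↥P | |gg n p| ≤ 1/((k:ℝ)+1)} ∈ Fc := by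
        intro n k
        have hlt : 1/((k:ℝ)+2) < 1/((k:ℝ)+1) :=
          one_div_lt_one_div_of_lt (by positivity) (by linarith)
        rcases hkey (fun p => |gg n p|) (hggc n).abs (1/((k:ℝ)+2)) (1/((k:ℝ)+1)) hlt with h1 | h2
        · exact h1
        · exfalso
          obtain ⟨q, hq⟩ := (hs n).2 _ h2
          have hq0 : gg n q = 0 := by
            have hmem := hq.1
            rw [hggeq n] at hmem
            exact hmem
          have hcon := hq.2
          simp only [mem_setOf_eq, hq0, abs_zero] at hcon
          have hpos : (0:ℝ) < 1/((k:ℝ)+2) := by positivity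
          linarith
      choose ZZ hZZU hZZsub using fun n k => (hT n k).2
      set t : ℕ → Set X := fun m => ZZ m.unpair.1 m.unpair.2 ∩ W with htdef
      have htU : ∀ m, t m ∈ U := fun m => hinter _ (hZZU _ _) _ hWU
      obtain ⟨x, hx⟩ := hreal t htU
      have hxW : x ∈ W := (mem_iInter.mp hx 0).2
      refine ⟨⟨x, hWP hxW⟩, mem_iInter.mpr fun n => ?_⟩
      rw [hggeq n]
      show gg n ⟨x, hWP hxW⟩ = 0
      have hle : ∀ k : ℕ, |gg n ⟨x, hWP hxW⟩| ≤ 1/((k:ℝ)+1) := by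
        intro k
        apply hZZsub n k
        have hxm := mem_iInter.mp hx (Nat.pair n k)
        simp only [htdef, Nat.unpair_pair] at hxm
        exact hxm.1
      by_contra h0
      have hpos : 0 < |gg n ⟨x, hWP hxW⟩| := abs_pos.mpr h0
      obtain ⟨k, hk⟩ := exists_nat_one_div_lt hpos
      exact absurd (hle k) (not_le.mpr hk)
    obtain ⟨p, hp⟩ := hPrc G ⟨hGfil, hGmax⟩ hGCIP
    exact ⟨↑p, fun Z hZ => hp _ (hFG (hpre Z hZ))⟩
end

section
/- If Z is a hard zero set in X, then cl_{δX} Z is compact in δX; more generally, if H is any hard set in X then cl_{δX} H is compact. -/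
open Set Topology

variable {X : Type*}

section StmtAux
variable [TopologicalSpace X]

lemma isZeroSet_univ : IsZeroSet (univ : Set X) :=
  ⟨fun _ => 0, continuous_const, by ext x; simp⟩

lemma isZeroSet_inter {Z₁ Z₂ : Set X} (h₁ : IsZeroSet Z₁) (h₂ : IsZeroSet Z₂) :
    IsZeroSet (Z₁ ∩ Z₂) := by
  obtain ⟨f, hf, rfl⟩ := h₁; obtain ⟨g, hg, rfl⟩ := h₂
  refine ⟨fun x => |f x| + |g x|, hf.abs.add hg.abs, ?_⟩
  ext x
  have h := add_eq_zero_iff_of_nonneg (abs_nonneg (f x)) (abs_nonneg (g x))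
  simp only [mem_inter_iff, mem_setOf_eq]
  rw [h, abs_eq_zero, abs_eq_zero]

lemma isZeroSet_union {Z₁ Z₂ : Set X} (h₁ : IsZeroSet Z₁) (h₂ : IsZeroSet Z₂) :
    IsZeroSet (Z₁ ∪ Z₂) := by
  obtain ⟨f, hf, rfl⟩ := h₁; obtain ⟨g, hg, rfl⟩ := h₂
  exact ⟨fun x => f x * g x, hf.mul hg, by ext x; simp [mul_eq_zero]⟩

lemma IsZeroSet.isClosed {Z : Set X} (h : IsZeroSet Z) : IsClosed Z := by
  obtain ⟨f, hf, rfl⟩ := h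
  exact isClosed_eq hf continuous_const

lemma exists_zUltrafilter {F : Set (Set X)} (hF : IsZFilter F) :
    ∃ G, IsZUltrafilter G ∧ F ⊆ G := by
  have hub : ∀ c ⊆ {G | IsZFilter G ∧ F ⊆ G}, IsChain (· ⊆ ·) c → c.Nonempty →
      ∃ ub ∈ {G | IsZFilter G ∧ F ⊆ G}, ∀ s ∈ c, s ⊆ ub := by
    intro c hcS hchain hcne
    obtain ⟨G₀, hG₀⟩ := hcne
    refine ⟨⋃₀ c, ⟨⟨?_, ?_, ?_, ?_, ?_⟩, ?_⟩, fun s hs => subset_sUnion_of_mem hs⟩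
    · rintro Z ⟨G, hGc, hZG⟩
      exact (hcS hGc).1.1 Z hZG
    · rintro ⟨G, hGc, hG⟩
      exact (hcS hGc).1.2.1 hG
    · exact ⟨G₀, hG₀, (hcS hG₀).1.2.2.1⟩
    · rintro Z₁ ⟨G₁, hG₁c, hZ₁⟩ Z₂ ⟨G₂, hG₂c, hZ₂⟩
      rcases eq_or_ne G₁ G₂ with rfl | hne
      · exact ⟨G₁, hG₁c, (hcS hG₁c).1.2.2.2.1 _ hZ₁ _ hZ₂⟩
      · rcases hchain hG₁c hG₂c hne with h | h
        · exact ⟨G₂, hG₂c, (hcS hG₂c).1.2.2.2.1 _ (h hZ₁) _ hZ₂⟩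
        · exact ⟨G₁, hG₁c, (hcS hG₁c).1.2.2.2.1 _ hZ₁ _ (h hZ₂)⟩
    · rintro Z₁ ⟨G, hGc, hZ₁⟩ Z₂ hZ₂ hsub
      exact ⟨G, hGc, (hcS hGc).1.2.2.2.2 _ hZ₁ _ hZ₂ hsub⟩
    · exact (hcS hG₀).2.trans (subset_sUnion_of_mem hG₀)
  obtain ⟨m, hFm, hm⟩ := zorn_subset_nonempty {G | IsZFilter G ∧ F ⊆ G} hub F ⟨hF, subset_rfl⟩
  exact ⟨m, ⟨hm.prop.1, fun G hG hmG => subset_antisymm (hm.2 ⟨hG, hm.prop.2.trans hmG⟩ hmG) hmG⟩,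
    hm.prop.2⟩

lemma zUltra_mem_of_inter {F : Set (Set X)} (hF : IsZUltrafilter F) {Z : Set X}
    (hZ : IsZeroSet Z) (h : ∀ W ∈ F, (W ∩ Z).Nonempty) : Z ∈ F := by
  set G := {E : Set X | IsZeroSet E ∧ ∃ W ∈ F, W ∩ Z ⊆ E} with hGdef
  have hG : IsZFilter G := by
    refine ⟨fun E hE => hE.1, ?_, ⟨isZeroSet_univ, univ, hF.1.2.2.1, subset_univ _⟩, ?_, ?_⟩
    · rintro ⟨-, W, hW, hsub⟩
      obtain ⟨x, hx⟩ := h W hW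
      exact hsub hx
    · rintro E₁ ⟨z₁, W₁, hW₁, s₁⟩ E₂ ⟨z₂, W₂, hW₂, s₂⟩
      exact ⟨isZeroSet_inter z₁ z₂, W₁ ∩ W₂, hF.1.2.2.2.1 _ hW₁ _ hW₂,
        fun x hx => ⟨s₁ ⟨hx.1.1, hx.2⟩, s₂ ⟨hx.1.2, hx.2⟩⟩⟩
    · rintro E₁ ⟨z₁, W, hW, s₁⟩ E₂ hz₂ hsub
      exact ⟨hz₂, W, hW, s₁.trans hsub⟩
  have hFG : F ⊆ G := fun W hW => ⟨hF.1.1 W hW, W, hW, inter_subset_left⟩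
  have hGF : G = F := hF.2 G hG hFG
  rw [← hGF]
  exact ⟨hZ, univ, hF.1.2.2.1, by simp⟩

lemma zUltra_union {F : Set (Set X)} (hF : IsZUltrafilter F) {Z₁ Z₂ : Set X}
    (h₁ : IsZeroSet Z₁) (h₂ : IsZeroSet Z₂) (h : Z₁ ∪ Z₂ ∈ F) : Z₁ ∈ F ∨ Z₂ ∈ F := by
  by_contra hc
  push_neg at hc
  have e₁ : ∃ W ∈ F, W ∩ Z₁ = ∅ := by
    by_contra he; push_neg at he
    exact hc.1 (zUltra_mem_of_inter hF h₁ fun W hW => he W hW)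
  have e₂ : ∃ W ∈ F, W ∩ Z₂ = ∅ := by
    by_contra he; push_neg at he
    exact hc.2 (zUltra_mem_of_inter hF h₂ fun W hW => he W hW)
  obtain ⟨W₁, hW₁, hWe₁⟩ := e₁
  obtain ⟨W₂, hW₂, hWe₂⟩ := e₂
  have hmem : W₁ ∩ W₂ ∩ (Z₁ ∪ Z₂) ∈ F :=
    hF.1.2.2.2.1 _ (hF.1.2.2.2.1 _ hW₁ _ hW₂) _ h
  have hempty : W₁ ∩ W₂ ∩ (Z₁ ∪ Z₂) = ∅ := by
    rw [eq_empty_iff_forall_notMem] at hWe₁ hWe₂ ⊢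
    rintro x ⟨⟨hx₁, hx₂⟩, hx | hx⟩
    · exact hWe₁ x ⟨hx₁, hx⟩
    · exact hWe₂ x ⟨hx₂, hx⟩
  rw [hempty] at hmem
  exact hF.1.2.1 hmem

lemma isClosed_deltaCl {Z : Set X} (hZ : IsZeroSet Z) : IsClosed (deltaCl Z) := by
  rw [← isOpen_compl_iff]
  exact TopologicalSpace.isOpen_generateFrom_of_mem ⟨Z, hZ, rfl⟩

def F0 (𝒰 : Ultrafilter (deltaX X)) : Set (Set X) := {Z | IsZeroSet Z ∧ deltaCl Z ∈ 𝒰}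

lemma F0_zfilter (𝒰 : Ultrafilter (deltaX X)) : IsZFilter (F0 𝒰) := by
  have hinter : ∀ Z₁ Z₂ : Set X, IsZeroSet Z₁ → IsZeroSet Z₂ →
      deltaCl (Z₁ ∩ Z₂) = deltaCl Z₁ ∩ deltaCl Z₂ := by
    intro Z₁ Z₂ h₁ h₂
    ext p
    constructor
    · intro h
      exact ⟨p.2.1.1.2.2.2.2 _ h _ h₁ inter_subset_left,
             p.2.1.1.2.2.2.2 _ h _ h₂ inter_subset_right⟩
    · rintro ⟨a, b⟩
      exact p.2.1.1.2.2.2.1 _ a _ b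
  refine ⟨fun Z hZ => hZ.1, ?_, ⟨isZeroSet_univ, ?_⟩, ?_, ?_⟩
  · rintro ⟨-, h⟩
    have he : deltaCl (∅ : Set X) = ∅ := by
      ext p
      exact ⟨fun h0 => p.2.1.1.2.1 h0, fun h0 => absurd h0 (notMem_empty p)⟩
    rw [he] at h
    exact 𝒰.empty_notMem h
  · have he : deltaCl (univ : Set X) = univ := eq_univ_of_forall fun p => p.2.1.1.2.2.1
    rw [he]; exact Filter.univ_mem
  · rintro Z₁ ⟨h₁, m₁⟩ Z₂ ⟨h₂, m₂⟩
    refine ⟨isZeroSet_inter h₁ h₂, ?_⟩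
    rw [hinter _ _ h₁ h₂]
    exact Filter.inter_mem m₁ m₂
  · rintro Z₁ ⟨h₁, m₁⟩ Z₂ hz₂ hsub
    exact ⟨hz₂, Filter.mem_of_superset m₁ fun p hp => p.2.1.1.2.2.2.2 _ hp _ hz₂ hsub⟩

lemma ult_le_nhds (𝒰 : Ultrafilter (deltaX X)) (p : deltaX X)
    (h : ∀ Z : Set X, IsZeroSet Z → deltaCl Z ∈ 𝒰 → Z ∈ p.1) : ↑𝒰 ≤ 𝓝 p := by
  have hn : 𝓝 p = ⨅ s ∈ {s | p ∈ s ∧ s ∈ {U | ∃ Z : Set X, IsZeroSet Z ∧ U = (deltaCl Z)ᶜ}},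
      Filter.principal s := TopologicalSpace.nhds_generateFrom
  rw [hn]
  refine le_iInf₂ fun s hs => ?_
  obtain ⟨hps, Z, hZ, rfl⟩ := hs
  rw [Filter.le_principal_iff]
  exact Ultrafilter.compl_mem_iff_notMem.mpr fun hmem => hps (h Z hZ hmem)

end StmtAux
/-- for a hard zero set Z, cl_{δX} Z is compact; for any hard set H,
the δX-closure of (the copy of) H is compact. -/
theorem stmt14 [TopologicalSpace X] [T35Space X] :
    (∀ Z : Set X, IsZeroSet Z → IsHard Z → IsCompact (deltaCl Z)) ∧
    (∀ H : Set X, IsHard H →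
      IsCompact (closure {p : deltaX X | ∃ x ∈ H, p.1 = pointUltra x})) := by
  constructor
  · intro Z hZzero hZhard
    rw [isCompact_iff_ultrafilter_le_nhds]
    intro 𝒰 h𝒰
    have hZ𝒰 : deltaCl Z ∈ 𝒰 := Filter.le_principal_iff.mp h𝒰
    obtain ⟨F, hFu, hsub⟩ := exists_zUltrafilter (F0_zfilter 𝒰)
    have hZF : Z ∈ F := hsub ⟨hZzero, hZ𝒰⟩
    exact ⟨⟨F, hFu, Or.inr ⟨Z, hZF, hZhard⟩⟩, hZF,
      ult_le_nhds 𝒰 _ fun Z' hZ' hm => hsub ⟨hZ', hm⟩⟩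
  · intro H hH
    rw [isCompact_iff_ultrafilter_le_nhds]
    intro 𝒰 h𝒰
    set S := {p : deltaX X | ∃ x ∈ H, p.1 = pointUltra x} with hSdef
    have hclS : closure S ∈ 𝒰 := Filter.le_principal_iff.mp h𝒰
    obtain ⟨F, hFu, hsub⟩ := exists_zUltrafilter (F0_zfilter 𝒰)
    have hHmem : ∀ Z' : Set X, IsZeroSet Z' → H ⊆ Z' → Z' ∈ F := by
      intro Z' hz hHZ
      refine hsub ⟨hz, Filter.mem_of_superset hclS ?_⟩
      refine (IsClosed.closure_subset_iff (isClosed_deltaCl hz)).mpr ?_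
      rintro p ⟨x, hxH, hpx⟩
      show Z' ∈ p.1
      rw [hpx]
      exact ⟨hz, hHZ hxH⟩
    obtain ⟨K, hK, hKP⟩ := hH.2
    have hFdelta : IsFixedFamily F ∨ ∃ H' ∈ F, IsHard H' := by
      by_cases hA : ∀ W ∈ F, (W ∩ K).Nonempty
      · left
        classical
        have hfin : ∀ u : Finset {W : Set X // W ∈ F}, ∃ W₀ ∈ F, W₀ ⊆ ⋂ W ∈ u, (W : Set X) := by
          intro u
          induction u using Finset.induction_on with
          | empty => exact ⟨univ, hFu.1.2.2.1, by simp⟩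
          | @insert a u ha ih =>
            obtain ⟨W₀, hW₀, hWsub⟩ := ih
            refine ⟨(a : Set X) ∩ W₀, hFu.1.2.2.2.1 _ a.2 _ hW₀, ?_⟩
            rw [Finset.set_biInter_insert]
            exact inter_subset_inter subset_rfl hWsub
        have hne : (K ∩ ⋂ W : {W : Set X // W ∈ F}, (W : Set X)).Nonempty := by
          by_contra hempty
          rw [not_nonempty_iff_eq_empty] at hempty
          obtain ⟨u, hu⟩ := hK.elim_finite_subfamily_closed _
            (fun W : {W : Set X // W ∈ F} => (hFu.1.1 _ W.2).isClosed) hempty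
          obtain ⟨W₀, hW₀, hWsub⟩ := hfin u
          obtain ⟨x, hxW, hxK⟩ := hA W₀ hW₀
          have hxmem : x ∈ K ∩ ⋂ W ∈ u, (W : Set X) := ⟨hxK, hWsub hxW⟩
          rw [hu] at hxmem
          exact notMem_empty x hxmem
        obtain ⟨x, -, hx⟩ := hne
        exact ⟨x, fun W hW => by simpa using mem_iInter.mp hx ⟨W, hW⟩⟩
      · right
        push_neg at hA
        obtain ⟨W₀, hW₀F, hW₀K⟩ := hA
        rw [eq_empty_iff_forall_notMem] at hW₀K
        have hW₀z : IsZeroSet W₀ := hFu.1.1 _ hW₀F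
        have hsep : ∀ x : K, ∃ g : X → ℝ, Continuous g ∧ g x = 1 ∧ (∀ y ∈ W₀, g y = 0) ∧
            ∀ y, 0 ≤ g y := by
          rintro ⟨x, hxK⟩
          have hx : x ∉ W₀ := fun hxW => hW₀K x ⟨hxW, hxK⟩
          obtain ⟨f, hf, hf0, hf1⟩ :=
            CompletelyRegularSpace.completely_regular x W₀ hW₀z.isClosed hx
          refine ⟨fun y => 1 - (f y : ℝ), continuous_const.sub (continuous_subtype_val.comp hf),
            ?_, ?_, ?_⟩
          · simp [hf0]
          · intro y hy
            have h1 : f y = 1 := hf1 hy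
            simp [h1]
          · intro y
            have h1 : (f y : ℝ) ≤ 1 := (f y).2.2
            show 0 ≤ 1 - (f y : ℝ)
            linarith
        choose g hgc hg1 hg0 hgnn using hsep
        have hcov : K ⊆ ⋃ x : K, {y | 1/2 < g x y} := by
          intro y hy
          refine mem_iUnion.mpr ⟨⟨y, hy⟩, ?_⟩
          show (1:ℝ)/2 < g ⟨y, hy⟩ y
          have := hg1 ⟨y, hy⟩
          rw [this]
          norm_num
        obtain ⟨t, ht⟩ := hK.elim_finite_subcover (fun x : K => {y | 1/2 < g x y})
          (fun x => isOpen_lt continuous_const (hgc x)) hcov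
        set G : X → ℝ := fun y => ∑ x ∈ t, g x y with hGdef
        have hGc : Continuous G := continuous_finset_sum _ fun x _ => hgc x
        have hGW₀ : ∀ y ∈ W₀, G y = 0 := fun y hy => Finset.sum_eq_zero fun x _ => hg0 x y hy
        have hGnn : ∀ y, 0 ≤ G y := fun y => Finset.sum_nonneg fun x _ => hgnn x y
        have hGK : ∀ y ∈ K, 1/2 < G y := by
          intro y hy
          obtain ⟨x, hxt, hxy⟩ := mem_iUnion₂.mp (ht hy)
          calc (1:ℝ)/2 < g x y := hxy
            _ ≤ G y := Finset.single_le_sum (fun i _ => hgnn i y) hxt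
        set ZV : Set X := {y | min (G y - 1/2) 0 = 0} with hZVdef
        have hZVz : IsZeroSet ZV :=
          ⟨fun y => min (G y - 1/2) 0, (hGc.sub continuous_const).min continuous_const, rfl⟩
        have hZViff : ∀ y, y ∈ ZV ↔ 1/2 ≤ G y := by
          intro y
          simp only [hZVdef, mem_setOf_eq, min_eq_right_iff]
          constructor
          · intro h; linarith
          · intro h; linarith
        have hZVW₀ : ZV ∩ W₀ = ∅ := by
          rw [eq_empty_iff_forall_notMem]
          rintro y ⟨hy1, hy2⟩
          have h1 := (hZViff y).mp hy1
          have h2 := hGW₀ y hy2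
          linarith
        obtain ⟨P, hP, f, hfc, hf0, hf1⟩ := hKP {y | 1/2 < G y}
          (isOpen_lt continuous_const hGc) (fun y hy => hGK y hy)
        set Z₁ : Set X := {y | max (f y - 1/2) 0 = 0} with hZ₁def
        have hZ₁z : IsZeroSet Z₁ :=
          ⟨fun y => max (f y - 1/2) 0, (hfc.sub continuous_const).max continuous_const, rfl⟩
        have hZ₁iff : ∀ y, y ∈ Z₁ ↔ f y ≤ 1/2 := by
          intro y
          simp only [hZ₁def, mem_setOf_eq, max_eq_right_iff]
          constructor
          · intro h; linarith
          · intro h; linarith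
        have hHsub : H ⊆ Z₁ ∪ ZV := by
          intro y hy
          by_cases hyV : y ∈ {y | 1/2 < G y}
          · exact Or.inr ((hZViff y).mpr (le_of_lt hyV))
          · refine Or.inl ((hZ₁iff y).mpr ?_)
            rw [hf0 y ⟨hy, hyV⟩]
            norm_num
        have hUnionF : Z₁ ∪ ZV ∈ F := hHmem _ (isZeroSet_union hZ₁z hZVz) hHsub
        rcases zUltra_union hFu hZ₁z hZVz hUnionF with h | h
        · refine ⟨Z₁, h, hZ₁z.isClosed, ∅, isCompact_empty, fun V' hV' _ => ⟨P, hP, ?_⟩⟩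
          refine ⟨fun y => min (max (2 * f y - 1) 0) 1,
            (((continuous_const.mul hfc).sub continuous_const).max continuous_const).min
              continuous_const, ?_, ?_⟩
          · rintro y ⟨hy, -⟩
            have hle : f y ≤ 1/2 := (hZ₁iff y).mp hy
            have h0 : max (2 * f y - 1) 0 = 0 := max_eq_right (by linarith)
            show min (max (2 * f y - 1) 0) 1 = 0
            rw [h0]
            exact min_eq_left (by norm_num)
          · intro y hy
            have h1 : f y = 1 := hf1 y hy
            show min (max (2 * f y - 1) 0) 1 = 1
            rw [h1]
            norm_num
        · exfalso
          have hm : ZV ∩ W₀ ∈ F := hFu.1.2.2.2.1 _ h _ hW₀F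
          rw [hZVW₀] at hm
          exact hFu.1.2.1 hm
    set q : deltaX X := ⟨F, hFu, hFdelta⟩ with hq
    have hle : (𝒰 : Filter (deltaX X)) ≤ 𝓝 q :=
      ult_le_nhds 𝒰 q fun Z' hZ' hm => hsub ⟨hZ', hm⟩
    refine ⟨q, ?_, hle⟩
    have hcp : ClusterPt q (Filter.principal (closure S)) :=
      Filter.NeBot.mono 𝒰.neBot (le_inf hle (Filter.le_principal_iff.mpr hclS))
    have hmem := mem_closure_iff_clusterPt.mpr hcp
    rwa [closure_closure] at hmem
end
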